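/- Let g ≥ 0, a, t be integers with a > 2g and |t| ≤ g, let n ≥ 0, and let q₁,…,qₙ > 0 and r₁,…,rₙ ≥ 0 and ξ₀, ξ₁,…,ξₙ be integers. Define δ_t(s) = (-1)^{s+1}·t + ξ₀ + a·s + Σᵢ₌₁ⁿ ⌊(ξᵢ + rᵢ·s)/qᵢ⌋ for s ∈ ℤ. Then δ_t is strictly increasing: δ_t(s) < δ_t(s+1) for all s ∈ ℤ. -/
import Mathlib


theorem delta_strictly_increasing
    (g a t : ℤ) (hg : 0 ≤ g) (ha : 2 * g < a) (ht : |t| ≤ g)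
    (n : ℕ) (q r ξ : Fin n → ℤ) (ξ₀ : ℤ)
    (hq : ∀ i, 0 < q i) (hr : ∀ i, 0 ≤ r i)
    (δ : ℤ → ℤ)
    (hδ : ∀ s : ℤ, δ s =
      ((s + 1).negOnePow : ℤ) * t + ξ₀ + a * s + ∑ i, (ξ i + r i * s).fdiv (q i)) :
    ∀ s : ℤ, δ s < δ (s + 1) := by
  intro s
  rw [hδ s, hδ (s + 1)]
  have hsum : ∑ i, (ξ i + r i * s).fdiv (q i) ≤ ∑ i, (ξ i + r i * (s + 1)).fdiv (q i) := by
    apply Finset.sum_le_sum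
    intro i _
    rw [Int.fdiv_eq_ediv_of_nonneg _ (le_of_lt (hq i)), Int.fdiv_eq_ediv_of_nonneg _ (le_of_lt (hq i))]
    exact Int.ediv_le_ediv (hq i) (by nlinarith [hr i])
  have hsgn : ((s + 1 + 1).negOnePow : ℤ) = -((s + 1).negOnePow : ℤ) := by
    rw [Int.negOnePow_succ]; push_cast; ring
  rw [hsgn]
  have hu : ((s + 1).negOnePow : ℤ) = 1 ∨ ((s + 1).negOnePow : ℤ) = -1 := by
    rcases Int.even_or_odd (s + 1) with h | h
    · left; rw [Int.negOnePow_even _ h]; rfl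
    · right; rw [Int.negOnePow_odd _ h]; rfl
  have habs := abs_le.mp ht
  rcases hu with h | h <;> rw [h] <;> nlinarith
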